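/- Structure of two-qubit product bases: every orthonormal basis of ℂ² ⊗ ℂ² consisting of product vectors is, up to reordering of its four elements, multiplication of elements by unit complex phases, and possibly swapping the two tensor factors, of the form {ψ₁⊗ψ₂, ψ₁⊗ψ₂^⊥, ψ₁^⊥⊗ψ₃, ψ₁^⊥⊗ψ₃^⊥} for some unit vectors ψ₁, ψ₂, ψ₃ ∈ ℂ², where for a unit vector φ ∈ ℂ², φ^⊥ denotes a unit vector orthogonal to φ. -/

import Mathlib

/-!
Write the basis vectors as `aᵢ ⊗ cᵢ` with unit factors. Two of them are orthogonal iff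
`aᵢ ⊥ aⱼ` or `cᵢ ⊥ cⱼ`, so these two relations together cover all pairs of the four vectors.
In `ℂ²` two unit vectors orthogonal to a common vector differ by a phase and are therefore not
orthogonal, so neither relation contains a triangle. Pigeonholing the three pairs at one vector
then forces one relation to contain a path `x — y — w — z` while the other contains `{w, x}`
and `{y, z}`; reading off the phases along this pattern gives the stated form, the swap
recording which factor carries the path.
-/

open scoped InnerProductSpace
open MeasureTheory

noncomputable section

abbrev Qubit : Type := EuclideanSpace ℂ (Fin 2)
abbrev NQubit (n : ℕ) : Type := EuclideanSpace ℂ (Fin n → Fin 2)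

/-- The product vector `ψ₁ ⊗ ⋯ ⊗ ψₙ` in `(ℂ²)^{⊗n}`, modelled concretely as
`EuclideanSpace ℂ (Fin n → Fin 2)`; its inner products satisfy
`⟨tens ψ, tens χ⟩ = ∏ j, ⟨ψ j, χ j⟩`. -/
noncomputable def tens {n : ℕ} (ψ : Fin n → Qubit) : NQubit n :=
  WithLp.toLp 2 (fun f => ∏ j, ψ j (f j))

/-- A vector of `(ℂ²)^{⊗n}` is a product vector if it is of the form `ψ₁ ⊗ ⋯ ⊗ ψₙ`. -/
def IsProduct {n : ℕ} (v : NQubit n) : Prop := ∃ ψ : Fin n → Qubit, v = tens ψ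

/-- A finite set of vectors forming an orthonormal basis of `H`. -/
def IsONBasis {H : Type*} [NormedAddCommGroup H] [InnerProductSpace ℂ H]
    (B : Finset H) : Prop :=
  Orthonormal ℂ (fun v : B => (v : H)) ∧ Submodule.span ℂ (B : Set H) = ⊤

/-- A KS-colouring of a set `S` of unit vectors: a `{0,1}`-valued map (modelled as a
predicate, `c v` meaning value `1`) such that every orthonormal basis contained in `S`
has exactly one element of value `1`, and no two mutually orthogonal elements of `S`
both have value `1`. -/
def IsKSColouring {H : Type*} [NormedAddCommGroup H] [InnerProductSpace ℂ H]
    (S : Set H) (c : H → Prop) : Prop :=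
  (∀ B : Finset H, ↑B ⊆ S → IsONBasis B → ∃! v, v ∈ B ∧ c v) ∧
  (∀ ψ ∈ S, ∀ χ ∈ S, ⟪ψ, χ⟫_ℂ = 0 → ¬(c ψ ∧ c χ))
/-- `pairT false a c = a ⊗ c` and `pairT true a c = c ⊗ a` in `ℂ² ⊗ ℂ²`; the Boolean
records a possible swap of the two tensor factors. -/
noncomputable def pairT (s : Bool) (a c : Qubit) : NQubit 2 :=
  if s then tens ![c, a] else tens ![a, c]

open Module

section TwoDimensional

variable {𝕜 E : Type*} [RCLike 𝕜] [NormedAddCommGroup E] [InnerProductSpace 𝕜 E]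
  [Fact (finrank 𝕜 E = 2)] {a x y : E}

theorem exists_norm_eq_one_smul_of_inner_eq_zero (ha : a ≠ 0) (hx : ‖x‖ = 1) (hy : ‖y‖ = 1)
    (hax : ⟪a, x⟫_𝕜 = 0) (hay : ⟪a, y⟫_𝕜 = 0) : ∃ u : 𝕜, ‖u‖ = 1 ∧ y = u • x := by
  obtain ⟨u, rfl⟩ := Submodule.mem_span_singleton.1 <|
    Submodule.mem_span_singleton_of_inner_eq_zero_of_inner_eq_zero ha
      (norm_ne_zero_iff.1 (by simp [hx])) hay hax
  exact ⟨u, by simpa [norm_smul, hx] using hy, rfl⟩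

theorem inner_ne_zero_of_inner_eq_zero (ha : a ≠ 0) (hx : ‖x‖ = 1) (hy : ‖y‖ = 1)
    (hax : ⟪a, x⟫_𝕜 = 0) (hay : ⟪a, y⟫_𝕜 = 0) : ⟪x, y⟫_𝕜 ≠ 0 := by
  obtain ⟨u, hu, rfl⟩ := exists_norm_eq_one_smul_of_inner_eq_zero ha hx hy hax hay
  rw [inner_smul_right, inner_self_eq_norm_sq_to_K, hx]
  simpa using norm_ne_zero_iff.1 (by simp [hu] : ‖u‖ ≠ 0)

end TwoDimensional

section BlockPattern

variable {α : Type*} {R S : α → α → Prop}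

/-- The shape of `{ψ₁⊗ψ₂, ψ₁⊗ψ₂^⊥, ψ₁^⊥⊗ψ₃, ψ₁^⊥⊗ψ₃^⊥}` when `R` and `S` are orthogonality of
the first and of the second factors: `R` separates the blocks `{w, x}` and `{y, z}`, `S` splits
each block. -/
def IsBlockPattern (R S : α → α → Prop) (w x y z : α) : Prop :=
  R w y ∧ R x y ∧ R w z ∧ S w x ∧ S y z

theorem exists_isBlockPattern_of_rel_of_rel (hRt : ∀ ⦃x y z⦄, R x y → R x z → ¬R y z)
    (hSt : ∀ ⦃x y z⦄, S x y → S x z → ¬S y z) (hcover : ∀ x y, x ≠ y → R x y ∨ S x y)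
    {i j k l : α} (hil : i ≠ l) (hjk : j ≠ k) (hjl : j ≠ l) (hkl : k ≠ l)
    (hij : R i j) (hik : R i k) :
    ∃ w x y z, IsBlockPattern R S w x y z := by
  have hSjk : S j k := (hcover j k hjk).resolve_left (hRt hij hik)
  have hSkj : S k j := (hcover k j hjk.symm).resolve_left (hRt hik hij)
  have hSil : S i l := by
    refine (hcover i l hil).resolve_left fun hRil => ?_
    have hSjl : S j l := (hcover j l hjl).resolve_left (hRt hij hRil)
    have hSkl : S k l := (hcover k l hkl).resolve_left (hRt hik hRil)
    exact hSt hSjk hSjl hSkl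
  rcases hcover l k hkl.symm with hRlk | hSlk
  · exact ⟨i, l, k, j, hik, hRlk, hij, hSil, hSkj⟩
  · have hRlj : R l j := (hcover l j hjl.symm).resolve_right fun hSlj => hSt hSlk hSlj hSkj
    exact ⟨i, l, j, k, hij, hRlj, hik, hSil, hSjk⟩

theorem exists_isBlockPattern [Fintype α] (hα : Fintype.card α = 4)
    (hRt : ∀ ⦃x y z⦄, R x y → R x z → ¬R y z) (hSt : ∀ ⦃x y z⦄, S x y → S x z → ¬S y z)
    (hcover : ∀ x y, x ≠ y → R x y ∨ S x y) :
    (∃ w x y z, IsBlockPattern R S w x y z) ∨ ∃ w x y z, IsBlockPattern S R w x y z := by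
  let e : Fin 4 ≃ α := (Fintype.equivFinOfCardEq hα).symm
  have hne {p q : Fin 4} (h : p ≠ q) : e p ≠ e q := e.injective.ne h
  have hcover' x y (h : x ≠ y) : S x y ∨ R x y := (hcover x y h).symm
  -- two of the three pairs containing `e 0` lie in the same relation
  rcases hcover (e 0) (e 1) (hne (by decide)) with h₁ | h₁ <;>
  rcases hcover (e 0) (e 2) (hne (by decide)) with h₂ | h₂ <;>
  rcases hcover (e 0) (e 3) (hne (by decide)) with h₃ | h₃ <;>
  first
  | refine .inl (exists_isBlockPattern_of_rel_of_rel hRt hSt hcover (l := e 3) ?_ ?_ ?_ ?_ h₁ h₂)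
  | refine .inl (exists_isBlockPattern_of_rel_of_rel hRt hSt hcover (l := e 2) ?_ ?_ ?_ ?_ h₁ h₃)
  | refine .inl (exists_isBlockPattern_of_rel_of_rel hRt hSt hcover (l := e 1) ?_ ?_ ?_ ?_ h₂ h₃)
  | refine .inr (exists_isBlockPattern_of_rel_of_rel hSt hRt hcover' (l := e 3) ?_ ?_ ?_ ?_ h₁ h₂)
  | refine .inr (exists_isBlockPattern_of_rel_of_rel hSt hRt hcover' (l := e 2) ?_ ?_ ?_ ?_ h₁ h₃)
  | refine .inr (exists_isBlockPattern_of_rel_of_rel hSt hRt hcover' (l := e 1) ?_ ?_ ?_ ?_ h₂ h₃)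
  all_goals exact hne (by decide)

theorem IsBlockPattern.injective {w x y z : α} (h : IsBlockPattern R S w x y z)
    (hR : ∀ x, ¬R x x) (hS : ∀ x, ¬S x x) (hRt : ∀ ⦃x y z⦄, R x y → R x z → ¬R y z) :
    Function.Injective ![w, x, y, z] := by
  obtain ⟨hwy, hxy, hwz, hwx, hyz⟩ := h
  have hne {p q : α} (h : R p q ∨ S p q) : p ≠ q := by rintro rfl; exact h.elim (hR p) (hS p)
  have hxz : x ≠ z := by rintro rfl; exact hRt hwz hwy hxy
  simpa [Function.Injective, Fin.forall_fin_succ, eq_comm] using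
    ⟨⟨hne (.inr hwx), hne (.inl hwy), hne (.inl hwz)⟩, ⟨hne (.inr hwx), hne (.inl hxy), hxz⟩,
      ⟨hne (.inl hwy), hne (.inl hxy), hne (.inr hyz)⟩, hne (.inl hwz), hxz, hne (.inr hyz)⟩

end BlockPattern

theorem IsONBasis.card_eq_finrank {H : Type*} [NormedAddCommGroup H] [InnerProductSpace ℂ H]
    {B : Finset H} (hB : IsONBasis B) : B.card = finrank ℂ H := by
  rw [← Fintype.card_coe, ← finrank_span_eq_card hB.1.linearIndependent,
    show Set.range (fun v : B => (v : H)) = B from Subtype.range_coe, hB.2, finrank_top]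

instance : Fact (finrank ℂ Qubit = 2) := ⟨by simp⟩

theorem inner_tens {n : ℕ} (ψ χ : Fin n → Qubit) :
    ⟪tens ψ, tens χ⟫_ℂ = ∏ j, ⟪ψ j, χ j⟫_ℂ := by
  simp only [PiLp.inner_apply, tens, RCLike.inner_apply, Fintype.prod_sum, map_prod,
    ← Finset.prod_mul_distrib]

theorem norm_tens {n : ℕ} (ψ : Fin n → Qubit) : ‖tens ψ‖ = ∏ j, ‖ψ j‖ := by
  have h := inner_tens ψ ψ
  simp only [inner_self_eq_norm_sq_to_K] at h
  refine (pow_left_inj₀ (norm_nonneg _) (by positivity) two_ne_zero).1 ?_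
  rw [← Finset.prod_pow]
  exact_mod_cast h

theorem tens_smul {n : ℕ} (r : Fin n → ℂ) (ψ : Fin n → Qubit) :
    tens (fun j => r j • ψ j) = (∏ j, r j) • tens ψ := by
  ext f
  simp [tens, Finset.prod_mul_distrib]

theorem IsProduct.exists_tens_of_norm_eq_one {n : ℕ} {v : NQubit n} (hv : IsProduct v)
    (hv1 : ‖v‖ = 1) : ∃ φ : Fin n → Qubit, (∀ j, ‖φ j‖ = 1) ∧ v = tens φ := by
  obtain ⟨ψ, rfl⟩ := hv
  have hψ (j : Fin n) : ‖ψ j‖ ≠ 0 := fun h => by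
    rw [norm_tens, Finset.prod_eq_zero (Finset.mem_univ j) h] at hv1
    exact zero_ne_one hv1
  refine ⟨fun j => (‖ψ j‖⁻¹ : ℂ) • ψ j, fun j => by simp [norm_smul, hψ j], ?_⟩
  rw [tens_smul, Finset.prod_inv_distrib, ← Complex.ofReal_prod, ← norm_tens, hv1]
  simp

theorem pairT_smul_left (s : Bool) (r : ℂ) (x y : Qubit) :
    pairT s (r • x) y = r • pairT s x y := by
  have h (p q : ℂ) (a c : Qubit) : tens ![p • a, q • c] = (p * q) • tens ![a, c] := by
    convert tens_smul ![p, q] ![a, c] using 2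
    · ext j : 1; fin_cases j <;> rfl
    · simp
  cases s
  · simpa [pairT] using h r 1 x y
  · simpa [pairT] using h 1 r y x
theorem exists_standard_form_of_isBlockPattern {B : Finset (NQubit 2)}
    (hcard : Fintype.card B = 4) (s : Bool) {a c : B → Qubit} (ha : ∀ v, ‖a v‖ = 1)
    (hc : ∀ v, ‖c v‖ = 1) (hv : ∀ v : B, (v : NQubit 2) = pairT s (a v) (c v)) {w x y z : B}
    (h : IsBlockPattern (fun v v' => ⟪a v, a v'⟫_ℂ = 0) (fun v v' => ⟪c v, c v'⟫_ℂ = 0) w x y z) :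
    ∃ ψ₁ ψ₁p ψ₂ ψ₂p ψ₃ ψ₃p : Qubit,
      ‖ψ₁‖ = 1 ∧ ‖ψ₁p‖ = 1 ∧ ‖ψ₂‖ = 1 ∧ ‖ψ₂p‖ = 1 ∧ ‖ψ₃‖ = 1 ∧ ‖ψ₃p‖ = 1 ∧
      ⟪ψ₁, ψ₁p⟫_ℂ = 0 ∧ ⟪ψ₂, ψ₂p⟫_ℂ = 0 ∧ ⟪ψ₃, ψ₃p⟫_ℂ = 0 ∧
      ∃ (s : Bool) (b : Fin 4 ≃ {v // v ∈ B}) (u : Fin 4 → ℂ),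
        (∀ i, ‖u i‖ = 1) ∧
        (b 0 : NQubit 2) = u 0 • pairT s ψ₁ ψ₂ ∧
        (b 1 : NQubit 2) = u 1 • pairT s ψ₁ ψ₂p ∧
        (b 2 : NQubit 2) = u 2 • pairT s ψ₁p ψ₃ ∧
        (b 3 : NQubit 2) = u 3 • pairT s ψ₁p ψ₃p := by
  have hne {d : B → Qubit} (hd : ∀ v, ‖d v‖ = 1) (v : B) : d v ≠ 0 :=
    norm_ne_zero_iff.1 (by simp [hd v])
  have hinj : Function.Injective ![w, x, y, z] :=
    h.injective (fun v => inner_self_ne_zero.2 (hne ha v))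
      (fun v => inner_self_ne_zero.2 (hne hc v))
      (fun v _ _ => inner_ne_zero_of_inner_eq_zero (hne ha v) (ha _) (ha _))
  obtain ⟨hwy, hxy, hwz, hwx, hyz⟩ := h
  obtain ⟨u, hu, hux⟩ := exists_norm_eq_one_smul_of_inner_eq_zero (hne ha y) (ha w) (ha x)
    (inner_eq_zero_symm.1 hwy) (inner_eq_zero_symm.1 hxy)
  obtain ⟨u', hu', huz⟩ := exists_norm_eq_one_smul_of_inner_eq_zero (hne ha w) (ha y) (ha z)
    hwy hwz
  let b : Fin 4 ≃ B := .ofBijective _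
    ((Fintype.bijective_iff_injective_and_card _).2 ⟨hinj, by simp [hcard]⟩)
  refine ⟨a w, a y, c w, c x, c y, c z, ha w, ha y, hc w, hc x, hc y, hc z, hwy, hwx, hyz,
    s, b, ![1, u, 1, u'], fun i => by fin_cases i <;> simp [hu, hu'], ?_, ?_, ?_, ?_⟩
  · simpa [b] using hv w
  · simpa [b, hux, pairT_smul_left] using hv x
  · simpa [b] using hv y
  · simpa [b, huz, pairT_smul_left] using hv z

/-- every orthonormal basis of `ℂ² ⊗ ℂ²` consisting of product vectors is,
up to reordering of its four elements, multiplication by unit phases and possibly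
swapping the two tensor factors, of the form
`{ψ₁⊗ψ₂, ψ₁⊗ψ₂^⊥, ψ₁^⊥⊗ψ₃, ψ₁^⊥⊗ψ₃^⊥}`. -/
theorem two_qubit_product_basis_structure
    (B : Finset (NQubit 2)) (hB : IsONBasis B) (hprod : ∀ v ∈ B, IsProduct v) :
    ∃ ψ₁ ψ₁p ψ₂ ψ₂p ψ₃ ψ₃p : Qubit,
      ‖ψ₁‖ = 1 ∧ ‖ψ₁p‖ = 1 ∧ ‖ψ₂‖ = 1 ∧ ‖ψ₂p‖ = 1 ∧ ‖ψ₃‖ = 1 ∧ ‖ψ₃p‖ = 1 ∧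
      ⟪ψ₁, ψ₁p⟫_ℂ = 0 ∧ ⟪ψ₂, ψ₂p⟫_ℂ = 0 ∧ ⟪ψ₃, ψ₃p⟫_ℂ = 0 ∧
      ∃ (s : Bool) (b : Fin 4 ≃ {v // v ∈ B}) (u : Fin 4 → ℂ),
        (∀ i, ‖u i‖ = 1) ∧
        (b 0 : NQubit 2) = u 0 • pairT s ψ₁ ψ₂ ∧
        (b 1 : NQubit 2) = u 1 • pairT s ψ₁ ψ₂p ∧
        (b 2 : NQubit 2) = u 2 • pairT s ψ₁p ψ₃ ∧
        (b 3 : NQubit 2) = u 3 • pairT s ψ₁p ψ₃p := by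
  have hcard : Fintype.card B = 4 := by simpa [finrank_euclideanSpace] using hB.card_eq_finrank
  choose φ hφ hvφ using fun v : B => (hprod v v.2).exists_tens_of_norm_eq_one (hB.1.1 v)
  have hv (v : B) : (v : NQubit 2) = tens ![φ v 0, φ v 1] := by
    rw [hvφ v, ← FinVec.etaExpand_eq (φ v)]; rfl
  have hcover (v w : B) (hvw : v ≠ w) : ⟪φ v 0, φ w 0⟫_ℂ = 0 ∨ ⟪φ v 1, φ w 1⟫_ℂ = 0 := by
    have h : ⟪(v : NQubit 2), w⟫_ℂ = 0 := hB.1.2 hvw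
    rwa [hvφ v, hvφ w, inner_tens, Fin.prod_univ_two, mul_eq_zero] at h
  have htri (j : Fin 2) ⦃v w w' : B⦄ (hvw : ⟪φ v j, φ w j⟫_ℂ = 0)
      (hvw' : ⟪φ v j, φ w' j⟫_ℂ = 0) : ⟪φ w j, φ w' j⟫_ℂ ≠ 0 :=
    inner_ne_zero_of_inner_eq_zero (norm_ne_zero_iff.1 (by simp [hφ v j])) (hφ w j) (hφ w' j)
      hvw hvw'
  rcases exists_isBlockPattern hcard (htri 0) (htri 1) hcover with
    ⟨w, x, y, z, h⟩ | ⟨w, x, y, z, h⟩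
  · exact exists_standard_form_of_isBlockPattern hcard false (fun v => hφ v 0) (fun v => hφ v 1)
      (fun v => by simp [pairT, hv v]) h
  · exact exists_standard_form_of_isBlockPattern hcard true (fun v => hφ v 1) (fun v => hφ v 0)
      (fun v => by simp [pairT, hv v]) h

end
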